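/- Let A be a quasitriangular bialgebra over a field F with R-matrix R and let b be a balance, i.e. an invertible central element of A with Δ(b) = (b⊗b)·R₂₁·R. Then (id, (R₂₁)⁻¹, b) is a cylindrical structure on (A, A). -/

import Mathlib

open TensorProduct

noncomputable section

variable (F : Type*) [Field F]

section BialgDefs

variable (A : Type*) [Ring A] [Bialgebra F A]

/-- Conjugation by an invertible element, as an algebra automorphism. -/
def conjEquiv (g gi : A) (h1 : g * gi = 1) (h2 : gi * g = 1) : A ≃ₐ[F] A where
  toFun a := g * a * gi
  invFun a := gi * a * g
  left_inv a := by simp only [← mul_assoc]; rw [h2, one_mul, mul_assoc, h2, mul_one]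
  right_inv a := by simp only [← mul_assoc]; rw [h1, one_mul, mul_assoc, h1, mul_one]
  map_mul' a b := by
    show g * (a * b) * gi = (g * a * gi) * (g * b * gi)
    simp only [mul_assoc]; rw [← mul_assoc gi g, h2, one_mul]
  map_add' a b := by
    show g * (a + b) * gi = g * a * gi + g * b * gi
    rw [mul_add, add_mul]
  commutes' r := by
    show g * algebraMap F A r * gi = algebraMap F A r
    rw [← Algebra.commutes r g, mul_assoc, h1, mul_one]

/-- The coproduct of `A`, as an algebra map. -/
def cop : A →ₐ[F] A ⊗[F] A := Bialgebra.comulAlgHom F A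

/-- The flip of the two tensor legs. -/
def flipT : (A ⊗[F] A) ≃ₐ[F] A ⊗[F] A := Algebra.TensorProduct.comm F A A

/-- The opposite coproduct. -/
def copOp : A →ₐ[F] A ⊗[F] A := (flipT F A).toAlgHom.comp (cop F A)

/-- `X ↦ X₁₂` on triple tensors. -/
def i12 : (A ⊗[F] A) →ₐ[F] A ⊗[F] (A ⊗[F] A) :=
  Algebra.TensorProduct.map (AlgHom.id F A) Algebra.TensorProduct.includeLeft

/-- `X ↦ X₁₃` on triple tensors. -/
def i13 : (A ⊗[F] A) →ₐ[F] A ⊗[F] (A ⊗[F] A) :=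
  Algebra.TensorProduct.map (AlgHom.id F A) Algebra.TensorProduct.includeRight

/-- `X ↦ X₂₃` on triple tensors. -/
def i23 : (A ⊗[F] A) →ₐ[F] A ⊗[F] (A ⊗[F] A) :=
  Algebra.TensorProduct.includeRight

/-- `Δ ⊗ id` landing in `A ⊗ (A ⊗ A)`. -/
def cop12 : (A ⊗[F] A) →ₐ[F] A ⊗[F] (A ⊗[F] A) :=
  (Algebra.TensorProduct.assoc F F F A A A).toAlgHom.comp
    (Algebra.TensorProduct.map (cop F A) (AlgHom.id F A))

/-- `id ⊗ Δ`. -/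
def cop23 : (A ⊗[F] A) →ₐ[F] A ⊗[F] (A ⊗[F] A) :=
  Algebra.TensorProduct.map (AlgHom.id F A) (cop F A)

/-- `ε ⊗ id`. -/
def counit2l : (A ⊗[F] A) →ₐ[F] A :=
  (Algebra.TensorProduct.lid F A).toAlgHom.comp
    (Algebra.TensorProduct.map (Bialgebra.counitAlgHom F A) (AlgHom.id F A))

/-- `id ⊗ ε`. -/
def counit2r : (A ⊗[F] A) →ₐ[F] A :=
  (Algebra.TensorProduct.rid F F A).toAlgHom.comp
    (Algebra.TensorProduct.map (AlgHom.id F A) (Bialgebra.counitAlgHom F A))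

/-- `ψ ⊗ φ` on `A ⊗ A`. -/
def mapT (ψ φ : A →ₐ[F] A) : (A ⊗[F] A) →ₐ[F] A ⊗[F] A := Algebra.TensorProduct.map ψ φ

/-- `R^ψ = (ψ ⊗ id)(R)`. -/
def rpsi (R : A ⊗[F] A) (ψ : A ≃ₐ[F] A) : A ⊗[F] A :=
  Algebra.TensorProduct.map ψ.toAlgHom (AlgHom.id F A) R

/-- `A` is quasitriangular with R-matrix `R` (with inverse `Ri`). -/
structure IsQT (R Ri : A ⊗[F] A) : Prop where
  mulInv : R * Ri = 1
  invMul : Ri * R = 1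
  intw : ∀ a : A, R * cop F A a * Ri = copOp F A a
  copL : cop12 F A R = i13 F A R * i23 F A R
  copR : cop23 F A R = i13 F A R * i12 F A R

/-- `(ψ, J)` is a twist pair (with `Ji` the inverse of `J`). -/
structure IsTwistPair (R Ri J Ji : A ⊗[F] A) (ψ : A ≃ₐ[F] A) : Prop where
  mulInv : J * Ji = 1
  invMul : Ji * J = 1
  cocycle : i12 F A J * cop12 F A J = i23 F A J * cop23 F A J
  counitL : counit2l F A J = 1
  counitR : counit2r F A J = 1
  intw : ∀ a : A,
    mapT F A ψ.toAlgHom ψ.toAlgHom (copOp F A (ψ.symm a)) = J * cop F A a * Ji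
  rrel : flipT F A (mapT F A ψ.toAlgHom ψ.toAlgHom R) = flipT F A J * R * Ji

/-- The image of `s ⊗ A` inside `A ⊗ A`, for a subset `s ⊆ A`. -/
def legSpan (s : Set A) : Submodule F (A ⊗[F] A) :=
  Submodule.span F {x : A ⊗[F] A | ∃ b ∈ s, ∃ a : A, x = b ⊗ₜ[F] a}

/-- `B` is a right coideal subalgebra of `A`. -/
def IsRightCoideal (B : Subalgebra F A) : Prop :=
  ∀ b ∈ B, cop F A b ∈ legSpan F A (B : Set A)

/-- The tensor K-matrix `𝕂 = (R^ψ)₂₁ ⬝ (1 ⊗ K) ⬝ R`. -/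
def tenK (R : A ⊗[F] A) (ψ : A ≃ₐ[F] A) (K : A) : A ⊗[F] A :=
  flipT F A (rpsi F A R ψ) * ((1 : A) ⊗ₜ[F] K) * R

/-- `(ψ, J, K)` is a cylindrical structure on `(A, B)`. -/
structure IsCylindrical (R Ri : A ⊗[F] A) (B : Subalgebra F A) (J Ji : A ⊗[F] A)
    (ψ : A ≃ₐ[F] A) (K Kinv : A) : Prop where
  twist : IsTwistPair F A R Ri J Ji ψ
  kMulInv : K * Kinv = 1
  kInvMul : Kinv * K = 1
  intwB : ∀ b ∈ B, K * b * Kinv = ψ b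
  support : tenK F A R ψ K ∈ legSpan F A (B : Set A)
  copK : cop F A K = Ji * (((1 : A) ⊗ₜ[F] K) * (rpsi F A R ψ * (K ⊗ₜ[F] (1 : A))))

end BialgDefs

section ModuleDefs

variable (A : Type*) [Ring A] [Bialgebra F A]

/-- Right partial transpose on `End V ⊗ End W`. -/
def pt2 (V W : Type*) [AddCommGroup V] [Module F V] [AddCommGroup W] [Module F W] :
    (Module.End F V ⊗[F] Module.End F W) →ₗ[F]
      (Module.End F V ⊗[F] Module.End F (Module.Dual F W)) :=
  TensorProduct.map LinearMap.id (Module.Dual.transpose (R := F) (M := W) (M' := W))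

/-- Identification `End V ⊗ End (W^∨∨) ≃ End V ⊗ End W` via the canonical iso `W ≅ W^∨∨`. -/
def ddIdent (V W : Type*) [AddCommGroup V] [Module F V] [AddCommGroup W] [Module F W]
    [FiniteDimensional F W] :
    (Module.End F V ⊗[F] Module.End F (Module.Dual F (Module.Dual F W))) →ₗ[F]
      (Module.End F V ⊗[F] Module.End F W) :=
  TensorProduct.map LinearMap.id ((Module.evalEquiv F W).conj.symm).toLinearMap

/-- The right partial trace `A ⊗ End V → A`. -/
def trace2 (V : Type*) [AddCommGroup V] [Module F V] :
    (A ⊗[F] Module.End F V) →ₗ[F] A :=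
  (TensorProduct.rid F A).toLinearMap.comp
    (TensorProduct.map LinearMap.id (LinearMap.trace F V))

/-- `T_{•,V}`: act with the second leg on `V`. -/
def actRight (V : Type*) [AddCommGroup V] [Module F V] (ρV : A →ₐ[F] Module.End F V) :
    (A ⊗[F] A) →ₐ[F] A ⊗[F] Module.End F V :=
  Algebra.TensorProduct.map (AlgHom.id F A) ρV

/-- The boundary transfer matrix `Tr₂(𝕂₍•,V₎)`. -/
def transfer (V : Type*) [AddCommGroup V] [Module F V] (ρV : A →ₐ[F] Module.End F V)
    (T : A ⊗[F] A) : A :=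
  trace2 F A V (actRight F A V ρV T)

/-- The module structure on `V ⊗ W` obtained from `Δ`. -/
def tensorRep (V W : Type*) [AddCommGroup V] [Module F V] [AddCommGroup W] [Module F W]
    (ρV : A →ₐ[F] Module.End F V) (ρW : A →ₐ[F] Module.End F W) :
    A →ₐ[F] Module.End F (V ⊗[F] W) :=
  (Module.endTensorEndAlgHom (R := F) (S := F) (A := F) (M := V) (N := W)).comp
    ((Algebra.TensorProduct.map ρV ρW).comp (cop F A))

/-- `g` (with inverse `gi`) is a boundary gauge transformation for the twist pair `(ψ, J)`. -/
def IsBoundaryGauge (R J : A ⊗[F] A) (ψ : A ≃ₐ[F] A) (g gi : A)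
    (hg1 : g * gi = 1) (hg2 : gi * g = 1) : Prop :=
  ∀ (V W : Type) [AddCommGroup V] [Module F V] [FiniteDimensional F V]
    [AddCommGroup W] [Module F W] [FiniteDimensional F W]
    (ρV : A →ₐ[F] Module.End F V) (ρW : A →ₐ[F] Module.End F W),
    let X := pt2 F V W
      ((Algebra.TensorProduct.map
        (ρV.comp (ψ.trans (conjEquiv F A g gi hg1 hg2)).toAlgHom) ρW) R)
    IsUnit X ∧ IsUnit (pt2 F V (Module.Dual F W) (Ring.inverse X)) ∧
      (Algebra.TensorProduct.map ρV ρW) ((g ⊗ₜ[F] g) * J * cop F A gi) =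
        ddIdent F V W (Ring.inverse (pt2 F V (Module.Dual F W) (Ring.inverse X)))

end ModuleDefs

/-!
With `ψ = id` and `J = (R₂₁)⁻¹` everything is read off from quasitriangularity through the flip.
The intertwining relation `R₂₁ Δ^op(a) = Δ(a) R₂₁`, applied in legs 2 and 3, gives the
Yang–Baxter equation for `R₂₁`; combined with the hexagon identities it says
`(Δ ⊗ id)(R₂₁) (R₂₁)₁₂ = (id ⊗ Δ)(R₂₁) (R₂₁)₂₃`, and inverting both sides is the cocycle identity
for `J`. Counitality of `J` is `(ε ⊗ id)(R) = 1 = (id ⊗ ε)(R)`, which follows by applying the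
counit to one leg of a hexagon identity. As `b` is central it conjugates trivially, and the balance
condition is exactly `Δ(b) = J⁻¹ (1 ⊗ b) R (b ⊗ 1)`.
-/

section TensorAlgebra

open Algebra.TensorProduct

variable {k B C : Type*} [CommSemiring k] [Semiring B] [Algebra k B] [Semiring C] [Algebra k C]

theorem tmul_commute_of_mem_center {b : B} {c : C} (hb : b ∈ Set.center B)
    (hc : c ∈ Set.center C) (X : B ⊗[k] C) : Commute (b ⊗ₜ[k] c) X := by
  induction X using TensorProduct.induction_on with
  | zero => exact Commute.zero_right _
  | tmul x y =>
    simp only [Commute, SemiconjBy, tmul_mul_tmul, Semigroup.mem_center_iff.1 hb x,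
      Semigroup.mem_center_iff.1 hc y]
  | add x y hx hy => exact hx.add_right hy

theorem one_tmul_mul_map_id {D : Type*} [Semiring D] [Algebra k D] {f g : C →ₐ[k] D} {y : D}
    (h : ∀ c, y * f c = g c * y) (X : B ⊗[k] C) :
    (1 ⊗ₜ[k] y) * map (AlgHom.id k B) f X = map (AlgHom.id k B) g X * (1 ⊗ₜ[k] y) := by
  induction X using TensorProduct.induction_on with
  | zero => simp only [map_zero, mul_zero, zero_mul]
  | tmul x c =>
    simp only [Algebra.TensorProduct.map_tmul, AlgHom.id_apply, tmul_mul_tmul, one_mul, mul_one, h]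
  | add X Y hX hY => simp only [map_add, mul_add, add_mul, hX, hY]

end TensorAlgebra

section Legs

open Algebra.TensorProduct

variable {F} {A : Type*} [Ring A] [Bialgebra F A]

theorem legSpan_top : legSpan F A (⊤ : Subalgebra F A) = ⊤ := by
  rw [legSpan, ← TensorProduct.span_tmul_eq_top]
  congr 1
  ext X
  exact ⟨fun ⟨b, _, a, h⟩ => ⟨b, a, h.symm⟩,
    fun ⟨b, a, h⟩ => ⟨b, trivial, a, h.symm⟩⟩

@[simp] theorem flipT_tmul (x y : A) : flipT F A (x ⊗ₜ y) = y ⊗ₜ x := rfl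

theorem i23_apply (X : A ⊗[F] A) : i23 F A X = 1 ⊗ₜ X := rfl

theorem cop23_def (X : A ⊗[F] A) : cop23 F A X = map (AlgHom.id F A) (cop F A) X := rfl

theorem copOp_apply (a : A) : copOp F A a = flipT F A (cop F A a) := rfl

theorem flipT_flipT (X : A ⊗[F] A) : flipT F A (flipT F A X) = X := by
  induction X using TensorProduct.induction_on with
  | zero => simp only [map_zero]
  | tmul x y => rfl
  | add X Y hX hY => simp only [map_add, hX, hY]

theorem mapT_refl :
    mapT F A (AlgEquiv.refl : A ≃ₐ[F] A).toAlgHom AlgEquiv.refl.toAlgHom = AlgHom.id F _ :=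
  map_id

theorem rpsi_refl (R : A ⊗[F] A) : rpsi F A R AlgEquiv.refl = R :=
  congrArg (· R) (map_id (R := F) (S := F) (A := A) (B := A))

variable (F A) in
/-- The cyclic permutation `x ⊗ y ⊗ z ↦ y ⊗ z ⊗ x` of the legs. -/
def rotate3 : A ⊗[F] (A ⊗[F] A) ≃ₐ[F] A ⊗[F] (A ⊗[F] A) :=
  (Algebra.TensorProduct.comm F A (A ⊗[F] A)).trans (Algebra.TensorProduct.assoc F F F A A A)

variable (F A) in
def swap23 : A ⊗[F] (A ⊗[F] A) →ₐ[F] A ⊗[F] (A ⊗[F] A) :=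
  map (AlgHom.id F A) (flipT F A).toAlgHom

theorem cop12_flipT (X : A ⊗[F] A) : cop12 F A (flipT F A X) = rotate3 F A (cop23 F A X) := by
  induction X using TensorProduct.induction_on with
  | zero => simp only [map_zero]
  | tmul x y => simp [cop12, cop23, rotate3]
  | add X Y hX hY => simp only [map_add, hX, hY]

theorem rotate3_i12 (X : A ⊗[F] A) : rotate3 F A (i12 F A X) = i13 F A (flipT F A X) := by
  induction X using TensorProduct.induction_on with
  | zero => simp only [map_zero]
  | tmul x y => simp [rotate3, i12, i13]
  | add X Y hX hY => simp only [map_add, hX, hY]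

theorem rotate3_i13 (X : A ⊗[F] A) : rotate3 F A (i13 F A X) = i23 F A (flipT F A X) := by
  induction X using TensorProduct.induction_on with
  | zero => simp only [map_zero]
  | tmul x y => simp [rotate3, i13, i23]
  | add X Y hX hY => simp only [map_add, hX, hY]

theorem map_id_copOp (X : A ⊗[F] A) :
    map (AlgHom.id F A) (copOp F A) X = swap23 F A (cop23 F A X) := by
  induction X using TensorProduct.induction_on with
  | zero => simp only [map_zero]
  | tmul x y => simp [copOp, swap23, cop23]
  | add X Y hX hY => simp only [map_add, hX, hY]

theorem swap23_i12 (X : A ⊗[F] A) : swap23 F A (i12 F A X) = i13 F A X := by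
  induction X using TensorProduct.induction_on with
  | zero => simp only [map_zero]
  | tmul x y => simp [swap23, i12, i13]
  | add X Y hX hY => simp only [map_add, hX, hY]

theorem swap23_i13 (X : A ⊗[F] A) : swap23 F A (i13 F A X) = i12 F A X := by
  induction X using TensorProduct.induction_on with
  | zero => simp only [map_zero]
  | tmul x y => simp [swap23, i12, i13]
  | add X Y hX hY => simp only [map_add, hX, hY]

theorem counit2l_flipT (X : A ⊗[F] A) : counit2l F A (flipT F A X) = counit2r F A X := by
  induction X using TensorProduct.induction_on with
  | zero => simp only [map_zero]
  | tmul x y => simp [counit2l, counit2r]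
  | add X Y hX hY => simp only [map_add, hX, hY]

theorem counit2r_flipT (X : A ⊗[F] A) : counit2r F A (flipT F A X) = counit2l F A X := by
  induction X using TensorProduct.induction_on with
  | zero => simp only [map_zero]
  | tmul x y => simp [counit2l, counit2r]
  | add X Y hX hY => simp only [map_add, hX, hY]

theorem counit2l_cop (a : A) : counit2l F A (cop F A a) = a := by
  show TensorProduct.lid F A (Coalgebra.counit.rTensor A (Coalgebra.comul a)) = a
  rw [Coalgebra.rTensor_counit_comul, TensorProduct.lid_tmul, one_smul]

theorem counit2r_cop (a : A) : counit2r F A (cop F A a) = a := by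
  show TensorProduct.rid F A (Coalgebra.counit.lTensor A (Coalgebra.comul a)) = a
  rw [Coalgebra.lTensor_counit_comul, TensorProduct.rid_tmul, one_smul]

variable (F A) in
def counitLeg1 : A ⊗[F] (A ⊗[F] A) →ₐ[F] A ⊗[F] A :=
  (map (counit2l F A) (AlgHom.id F A)).comp (Algebra.TensorProduct.assoc F F F A A A).symm.toAlgHom

variable (F A) in
def counitLeg3 : A ⊗[F] (A ⊗[F] A) →ₐ[F] A ⊗[F] A :=
  map (AlgHom.id F A) (counit2r F A)

theorem counitLeg1_cop12 (X : A ⊗[F] A) : counitLeg1 F A (cop12 F A X) = X := by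
  induction X using TensorProduct.induction_on with
  | zero => simp only [map_zero]
  | tmul x y => simp [counitLeg1, cop12, counit2l_cop]
  | add X Y hX hY => simp only [map_add, hX, hY]

theorem counitLeg1_i13 (X : A ⊗[F] A) : counitLeg1 F A (i13 F A X) = 1 ⊗ₜ counit2l F A X := by
  induction X using TensorProduct.induction_on with
  | zero => simp only [map_zero, TensorProduct.tmul_zero]
  | tmul x y => simp [counitLeg1, i13, counit2l, TensorProduct.smul_tmul', TensorProduct.tmul_smul]
  | add X Y hX hY => simp only [map_add, hX, hY, TensorProduct.tmul_add]

theorem counitLeg1_i23 (X : A ⊗[F] A) : counitLeg1 F A (i23 F A X) = X := by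
  induction X using TensorProduct.induction_on with
  | zero => simp only [map_zero]
  | tmul x y => simp [counitLeg1, i23, counit2l]
  | add X Y hX hY => simp only [map_add, hX, hY]

theorem counitLeg3_cop23 (X : A ⊗[F] A) : counitLeg3 F A (cop23 F A X) = X := by
  induction X using TensorProduct.induction_on with
  | zero => simp only [map_zero]
  | tmul x y => simp [counitLeg3, cop23, counit2r_cop]
  | add X Y hX hY => simp only [map_add, hX, hY]

theorem counitLeg3_i13 (X : A ⊗[F] A) : counitLeg3 F A (i13 F A X) = counit2r F A X ⊗ₜ 1 := by
  induction X using TensorProduct.induction_on with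
  | zero => simp only [map_zero, TensorProduct.zero_tmul]
  | tmul x y => simp [counitLeg3, i13, counit2r, TensorProduct.smul_tmul', TensorProduct.tmul_smul]
  | add X Y hX hY => simp only [map_add, hX, hY, TensorProduct.add_tmul]

theorem counitLeg3_i12 (X : A ⊗[F] A) : counitLeg3 F A (i12 F A X) = X := by
  induction X using TensorProduct.induction_on with
  | zero => simp only [map_zero]
  | tmul x y => simp [counitLeg3, i12, counit2r]
  | add X Y hX hY => simp only [map_add, hX, hY]

end Legs

namespace IsQT

variable {F} {A : Type*} [Ring A] [Bialgebra F A] {R Ri : A ⊗[F] A}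

theorem isUnit (hR : IsQT F A R Ri) : IsUnit R := ⟨⟨R, Ri, hR.mulInv, hR.invMul⟩, rfl⟩

theorem counit2l_eq_one (hR : IsQT F A R Ri) : counit2l F A R = 1 := by
  have h := congrArg (counitLeg1 F A) hR.copL
  rw [counitLeg1_cop12, map_mul, counitLeg1_i13, counitLeg1_i23, eq_comm,
    hR.isUnit.mul_eq_right] at h
  simpa [counit2l] using congrArg (counit2l F A) h

theorem counit2r_eq_one (hR : IsQT F A R Ri) : counit2r F A R = 1 := by
  have h := congrArg (counitLeg3 F A) hR.copR
  rw [counitLeg3_cop23, map_mul, counitLeg3_i13, counitLeg3_i12, eq_comm,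
    hR.isUnit.mul_eq_right] at h
  simpa [counit2r] using congrArg (counit2r F A) h

theorem mul_cop (hR : IsQT F A R Ri) (a : A) : R * cop F A a = copOp F A a * R := by
  rw [← hR.intw a, mul_assoc _ Ri, hR.invMul, mul_one]

theorem flipT_mul_copOp (hR : IsQT F A R Ri) (a : A) :
    flipT F A R * copOp F A a = cop F A a * flipT F A R := by
  simpa only [map_mul, copOp_apply, flipT_flipT] using congrArg (flipT F A) (hR.mul_cop a)

theorem copOp_eq (hR : IsQT F A R Ri) (a : A) :
    copOp F A a = flipT F A Ri * cop F A a * flipT F A R := by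
  rw [mul_assoc, ← hR.flipT_mul_copOp, ← mul_assoc, ← map_mul, hR.invMul, map_one, one_mul]

theorem cop12_flipT (hR : IsQT F A R Ri) :
    cop12 F A (flipT F A R) = i23 F A (flipT F A R) * i13 F A (flipT F A R) := by
  rw [_root_.cop12_flipT, hR.copR, map_mul, rotate3_i13, rotate3_i12]

theorem cop23_flipT (hR : IsQT F A R Ri) :
    cop23 F A (flipT F A R) = i12 F A (flipT F A R) * i13 F A (flipT F A R) := by
  apply (rotate3 F A).injective
  rw [← _root_.cop12_flipT, flipT_flipT, hR.copL, map_mul, rotate3_i12, rotate3_i13, flipT_flipT]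

theorem yangBaxter_flipT (hR : IsQT F A R Ri) :
    i23 F A (flipT F A R) * (i13 F A (flipT F A R) * i12 F A (flipT F A R)) =
      i12 F A (flipT F A R) * (i13 F A (flipT F A R) * i23 F A (flipT F A R)) := by
  have h := one_tmul_mul_map_id (B := A) (f := copOp F A) (g := cop F A)
    hR.flipT_mul_copOp (flipT F A R)
  rwa [← i23_apply, ← cop23_def, map_id_copOp, hR.cop23_flipT, map_mul, swap23_i12, swap23_i13,
    mul_assoc] at h

theorem cocycle_flipT_inv (hR : IsQT F A R Ri) :
    i12 F A (flipT F A Ri) * cop12 F A (flipT F A Ri) =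
      i23 F A (flipT F A Ri) * cop23 F A (flipT F A Ri) := by
  set S := flipT F A R
  set Si := flipT F A Ri
  -- both sides are left inverses of `S₂₃ S₁₃ S₁₂ = S₁₂ S₁₃ S₂₃`
  have hSiS : Si * S = 1 := by rw [← map_mul, hR.invMul, map_one]
  have hSSi : S * Si = 1 := by rw [← map_mul, hR.mulInv, map_one]
  have hM : cop12 F A S * i12 F A S = cop23 F A S * i23 F A S := by
    rw [hR.cop12_flipT, hR.cop23_flipT, mul_assoc, hR.yangBaxter_flipT, mul_assoc]
  refine left_inv_eq_right_inv (a := cop12 F A S * i12 F A S) ?_ ?_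
  · calc i12 F A Si * cop12 F A Si * (cop12 F A S * i12 F A S)
        = i12 F A Si * cop12 F A (Si * S) * i12 F A S := by simp only [map_mul, mul_assoc]
      _ = 1 := by rw [hSiS, map_one, mul_one, ← map_mul, hSiS, map_one]
  · calc cop12 F A S * i12 F A S * (i23 F A Si * cop23 F A Si)
        = cop23 F A S * i23 F A (S * Si) * cop23 F A Si := by simp only [hM, map_mul, mul_assoc]
      _ = 1 := by rw [hSSi, map_one, mul_one, ← map_mul, hSSi, map_one]

theorem isTwistPair_flipT_inv (hR : IsQT F A R Ri) :
    IsTwistPair F A R Ri (flipT F A Ri) (flipT F A R) AlgEquiv.refl where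
  mulInv := by rw [← map_mul, hR.invMul, map_one]
  invMul := by rw [← map_mul, hR.mulInv, map_one]
  cocycle := hR.cocycle_flipT_inv
  counitL := by
    have h := congrArg (counit2r F A) hR.invMul
    rwa [map_mul, hR.counit2r_eq_one, mul_one, map_one, ← counit2l_flipT] at h
  counitR := by
    have h := congrArg (counit2l F A) hR.invMul
    rwa [map_mul, hR.counit2l_eq_one, mul_one, map_one, ← counit2r_flipT] at h
  intw a := by
    rw [mapT_refl, AlgHom.id_apply]
    exact hR.copOp_eq a
  rrel := by rw [mapT_refl, AlgHom.id_apply, flipT_flipT, hR.invMul, one_mul]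

end IsQT

/-- a balance `b` gives the cylindrical structure `(id, (R₂₁)⁻¹, b)`
on `(A, A)`. -/
theorem statement17 {F A : Type*} [Field F] [Ring A] [Bialgebra F A]
    (R Ri : A ⊗[F] A) (hQT : IsQT F A R Ri)
    (b bi : A) (hb1 : b * bi = 1) (hb2 : bi * b = 1)
    (hbc : ∀ a : A, b * a = a * b)
    (hΔb : cop F A b = (b ⊗ₜ[F] b) * (flipT F A R * R)) :
    IsCylindrical F A R Ri ⊤ (flipT F A Ri) (flipT F A R) ((AlgEquiv.refl : A ≃ₐ[F] A)) b bi := by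
  have hb : b ∈ Set.center A := Semigroup.mem_center_iff.2 fun a => (hbc a).symm
  refine ⟨hQT.isTwistPair_flipT_inv, hb1, hb2, fun c _ => ?_, ?_, ?_⟩
  · show b * c * bi = c
    rw [hbc, mul_assoc, hb1, mul_one]
  · rw [legSpan_top]
    exact Submodule.mem_top
  · have hRb : (1 ⊗ₜ[F] b) * (R * (b ⊗ₜ[F] 1)) = R * (b ⊗ₜ[F] b) := by
      rw [← mul_assoc, (tmul_commute_of_mem_center Set.one_mem_center hb R).eq, mul_assoc,
        Algebra.TensorProduct.tmul_mul_tmul, one_mul, mul_one]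
    rw [hΔb, rpsi_refl, hRb, (tmul_commute_of_mem_center hb hb _).eq, mul_assoc]

end
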